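/- arXiv:2101.08357 — 6 statements merged into one kernel-verified Lean document; each statement's English description precedes it below -/
import Mathlib

section
/- Let V be a complex Hilbert space and let T, Q be bounded selfadjoint operators on V with Q nonnegative. Then for every z ∈ ℂ with Re z ≤ 0 and every u ∈ V one has ‖(z(I + iT) − Q)u‖ ≥ |z|·‖u‖. -/
/-!
Pair `A u = (z • (1 + I • T) - Q) u` with `z • u`. Since `I • T` is skew-adjoint its contribution
to `re ⟪z • u, A u⟫` vanishes, and `Q` contributes `-(re z) * re ⟪u, Q u⟫ ≥ 0`; hence
`‖z • u‖ ^ 2 ≤ re ⟪z • u, A u⟫ ≤ ‖z • u‖ * ‖A u‖` by Cauchy–Schwarz.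
-/

open scoped InnerProductSpace

theorem norm_le_of_norm_sq_le_re_inner {𝕜 E : Type*} [RCLike 𝕜] [NormedAddCommGroup E]
    [InnerProductSpace 𝕜 E] {x y : E} (h : ‖x‖ ^ 2 ≤ RCLike.re ⟪x, y⟫_𝕜) : ‖x‖ ≤ ‖y‖ := by
  rcases (norm_nonneg x).eq_or_lt with hx | hx
  · exact hx ▸ norm_nonneg y
  · have := h.trans (re_inner_le_norm x y)
    nlinarith

namespace LinearMap.IsSymmetric

variable {V : Type*} [NormedAddCommGroup V] [InnerProductSpace ℂ V] {T : V →L[ℂ] V}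

theorem re_inner_I_smul_apply_self (hT : (T : V →ₗ[ℂ] V).IsSymmetric) (x : V) :
    (⟪x, Complex.I • T x⟫_ℂ).re = 0 := by
  have him : (⟪x, T x⟫_ℂ).im = 0 := hT.im_inner_self_apply x
  simp [him]

theorem re_inner_smul_apply_nonpos (hT : (T : V →ₗ[ℂ] V).IsSymmetric) {u : V}
    (hu : 0 ≤ (⟪u, T u⟫_ℂ).re) {z : ℂ} (hz : z.re ≤ 0) : (⟪z • u, T u⟫_ℂ).re ≤ 0 := by
  have him : (⟪u, T u⟫_ℂ).im = 0 := hT.im_inner_self_apply u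
  rw [inner_smul_left, Complex.mul_re, Complex.conj_re, Complex.conj_im, him, mul_zero, sub_zero]
  exact mul_nonpos_of_nonpos_of_nonneg hz hu

end LinearMap.IsSymmetric

/-- Let `V` be a complex Hilbert space and `T, Q` bounded selfadjoint
operators on `V` with `Q` nonnegative. Then for every `z ∈ ℂ` with `Re z ≤ 0` and every
`u ∈ V` one has `‖(z(I + iT) − Q)u‖ ≥ |z|·‖u‖`. -/
theorem norm_lower_bound_of_selfAdjoint_nonneg
    {V : Type*} [NormedAddCommGroup V] [InnerProductSpace ℂ V] [CompleteSpace V]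
    (T Q : V →L[ℂ] V) (hT : IsSelfAdjoint T) (hQ : IsSelfAdjoint Q)
    (hQnn : ∀ u : V, 0 ≤ (inner ℂ u (Q u) : ℂ).re)
    (z : ℂ) (hz : z.re ≤ 0) (u : V) :
    ‖z‖ * ‖u‖ ≤ ‖(z • ((1 : V →L[ℂ] V) + Complex.I • T) - Q) u‖ := by
  have hAu : (z • ((1 : V →L[ℂ] V) + Complex.I • T) - Q) u
      = z • u + Complex.I • T (z • u) - Q u := by
    simp [smul_add, smul_comm z Complex.I]
  have hkey : ‖z • u‖ ^ 2 ≤ (⟪z • u, (z • ((1 : V →L[ℂ] V) + Complex.I • T) - Q) u⟫_ℂ).re := by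
    rw [hAu, inner_sub_right, inner_add_right, Complex.sub_re, Complex.add_re,
      hT.isSymmetric.re_inner_I_smul_apply_self, ← RCLike.re_to_complex, inner_self_eq_norm_sq]
    linarith [hQ.isSymmetric.re_inner_smul_apply_nonpos (hQnn u) hz]
  rw [← norm_smul]
  exact norm_le_of_norm_sq_le_re_inner (𝕜 := ℂ) hkey
end

section
/- Let V be a complex Hilbert space and let T, Q be bounded selfadjoint operators on V with Q nonnegative. Then for every z ∈ ℂ with Re z ≤ 0 and z ≠ 0, the operator z(I + iT) − Q is boundedly invertible on V and ‖z·(z(I + iT) − Q)⁻¹‖ ≤ 1. -/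
/-!
For `A = z • (1 + I • T) - Q` one has `⟪u, A u⟫ = z * w - q` with `Re w = ‖u‖²` and
`q = ⟪u, Q u⟫ ≥ 0` real, because `T` and `Q` are selfadjoint. As `Re z ≤ 0`, this gives the
coercivity estimate `|⟪u, A u⟫| ≥ |z| ‖u‖²`, so the Lax–Milgram argument makes `A` invertible
with `‖A⁻¹‖ ≤ |z|⁻¹`.
-/

open ContinuousLinearMap
open scoped InnerProductSpace NNReal

/-- Write `z * w - q = z * (w - q / z)`; then `Re (q / z) = q Re z / |z|² ≤ 0`. -/
theorem Complex.norm_mul_re_le_norm_mul_sub_ofReal {z : ℂ} (hz : z.re ≤ 0) (w : ℂ) {q : ℝ}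
    (hq : 0 ≤ q) : ‖z‖ * w.re ≤ ‖z * w - q‖ := by
  rcases eq_or_ne z 0 with rfl | hz0
  · simp
  have hre : (q / z).re ≤ 0 := by
    rw [div_eq_mul_inv, Complex.re_ofReal_mul, Complex.inv_re]
    exact mul_nonpos_of_nonneg_of_nonpos hq (div_nonpos_of_nonpos_of_nonneg hz z.normSq_nonneg)
  calc ‖z‖ * w.re ≤ ‖z‖ * (w - q / z).re := by
        refine mul_le_mul_of_nonneg_left ?_ (norm_nonneg z)
        rw [Complex.sub_re]
        linarith
    _ ≤ ‖z‖ * ‖w - q / z‖ := by gcongr; exact Complex.re_le_norm _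
    _ = ‖z * w - q‖ := by rw [← norm_mul, mul_sub, mul_div_cancel₀ _ hz0]

theorem sq_norm_mul_norm_le_norm_inner_smul_one_add_I_smul_sub_apply {V : Type*}
    [NormedAddCommGroup V] [InnerProductSpace ℂ V] [CompleteSpace V] {T Q : V →L[ℂ] V}
    (hT : IsSelfAdjoint T) (hQ : IsSelfAdjoint Q) (hQnn : ∀ u : V, 0 ≤ (⟪u, Q u⟫_ℂ).re)
    {z : ℂ} (hz : z.re ≤ 0) (u : V) :
    ‖u‖ ^ 2 * ‖z‖ ≤ ‖⟪(z • (1 + Complex.I • T) - Q) u, u⟫_ℂ‖ := by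
  have hinner : ⟪u, (z • (1 + Complex.I • T) - Q) u⟫_ℂ
      = z * ⟪u, u + Complex.I • T u⟫_ℂ - ((⟪u, Q u⟫_ℂ).re : ℂ) := by
    have hQu : (((⟪u, Q u⟫_ℂ).re : ℝ) : ℂ) = ⟪u, Q u⟫_ℂ :=
      hQ.isSymmetric.coe_re_inner_self_apply u
    rw [hQu]
    simp only [sub_apply, smul_apply, add_apply, one_apply_eq_self, inner_sub_right,
      inner_smul_right]
  have hre : (⟪u, u + Complex.I • T u⟫_ℂ).re = ‖u‖ ^ 2 := by
    have hTu : (⟪u, T u⟫_ℂ).im = 0 := hT.isSymmetric.im_inner_self_apply u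
    rw [inner_add_right, inner_smul_right, Complex.add_re, Complex.I_mul_re, hTu, neg_zero,
      add_zero]
    exact inner_self_eq_norm_sq (𝕜 := ℂ) u
  rw [norm_inner_symm, hinner, mul_comm, ← hre]
  exact Complex.norm_mul_re_le_norm_mul_sub_ofReal hz _ (hQnn u)

theorem ContinuousLinearMap.norm_ringInverse_le_of_antilipschitz {𝕜 E : Type*}
    [NontriviallyNormedField 𝕜] [NormedAddCommGroup E] [NormedSpace 𝕜 E] {A : E →L[𝕜] E}
    (hA : IsUnit A) {K : ℝ≥0} (hK : AntilipschitzWith K A) : ‖Ring.inverse A‖ ≤ K := by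
  obtain ⟨A, rfl⟩ := hA
  rw [Ring.inverse_unit]
  refine opNorm_le_bound _ K.coe_nonneg fun v => ?_
  have hv : (A : E →L[𝕜] E) ((↑A⁻¹ : E →L[𝕜] E) v) = v := by
    rw [← mul_apply_eq_comp, A.mul_inv, one_apply_eq_self]
  simpa only [hv] using hK.le_mul_norm (map_zero _) ((↑A⁻¹ : E →L[𝕜] E) v)

/-- Let `V` be a complex Hilbert space and `T, Q` bounded selfadjoint
operators on `V` with `Q` nonnegative. Then for every `z ∈ ℂ` with `Re z ≤ 0` and
`z ≠ 0`, the operator `z(I + iT) − Q` is boundedly invertible on `V` and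
`‖z·(z(I + iT) − Q)⁻¹‖ ≤ 1`. -/
theorem isUnit_and_norm_inverse_le_one_of_selfAdjoint_nonneg
    {V : Type*} [NormedAddCommGroup V] [InnerProductSpace ℂ V] [CompleteSpace V]
    (T Q : V →L[ℂ] V) (hT : IsSelfAdjoint T) (hQ : IsSelfAdjoint Q)
    (hQnn : ∀ u : V, 0 ≤ (inner ℂ u (Q u) : ℂ).re)
    (z : ℂ) (hz : z.re ≤ 0) (hz0 : z ≠ 0) :
    IsUnit (z • ((1 : V →L[ℂ] V) + Complex.I • T) - Q) ∧
    ‖z • Ring.inverse (z • ((1 : V →L[ℂ] V) + Complex.I • T) - Q)‖ ≤ 1 := by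
  have hc : 0 < ‖z‖₊ := nnnorm_pos.mpr hz0
  have hbound := sq_norm_mul_norm_le_norm_inner_smul_one_add_I_smul_sub_apply hT hQ hQnn hz
  have hunit := isUnit_of_forall_le_norm_inner_map _ hc hbound
  refine ⟨hunit, ?_⟩
  calc ‖z • Ring.inverse (z • ((1 : V →L[ℂ] V) + Complex.I • T) - Q)‖
      = ‖z‖ * ‖Ring.inverse (z • ((1 : V →L[ℂ] V) + Complex.I • T) - Q)‖ := norm_smul _ _
    _ ≤ ‖z‖ * ‖z‖⁻¹ := by
        gcongr
        exact norm_ringInverse_le_of_antilipschitz hunit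
          (antilipschitz_of_forall_le_inner_map _ hc hbound)
    _ = 1 := mul_inv_cancel₀ (norm_ne_zero_iff.mpr hz0)
end

section
/- Let V be a complex Hilbert space, T, Q bounded selfadjoint operators on V with Q nonnegative, and set A := Q(I + iT)⁻¹. Then A is sectorial of angle strictly less than π/2: there exists θ ∈ (0, π/2) such that the spectrum of A is contained in the closed sector Σ_θ, and for every θ' ∈ (θ, π) one has sup{‖z(zI − A)⁻¹‖ : z ∈ ℂ \ Σ_{θ'}, z ≠ 0} < ∞. -/
/-!
Write `A = Q G⁻¹` with `G = 1 + iT`, so that `z - A = (zG - Q) G⁻¹`. For a unit vector `u`,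
`⟪u, (zG - Q) u⟫ = z (1 + it) - q` with `|t| ≤ ‖T‖` and `q ≥ 0`. Multiplication by `1 + it` does
not shrink `z` and turns it by an angle at most `φ = arctan ‖T‖`, and a point `w` at angle `α` from
the positive real axis is at distance at least `‖w‖ α / π` from that axis. So the numerical range
of `zG - Q` keeps distance `‖z‖ (|arg z| - φ) / π` from `0`, which makes `zG - Q` invertible with
`‖(zG - Q)⁻¹‖ ≤ π / (‖z‖ (|arg z| - φ))`; any `θ ∈ (φ, π/2)` is a sectoriality angle.
-/

/-- The closed sector `Σ_θ = {0} ∪ {z ≠ 0 : |arg z| ≤ θ}` in `ℂ`. -/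
def sector (θ : ℝ) : Set ℂ := {z : ℂ | z = 0 ∨ |z.arg| ≤ θ}

open InnerProductGeometry Complex
open scoped Real

namespace Complex

lemma norm_sub_norm_le_two_mul_norm_sub (w : ℂ) {q : ℝ} (hq : 0 ≤ q) :
    ‖w - ‖w‖‖ ≤ 2 * ‖w - q‖ := by
  have hq' : ‖(q : ℂ) - ‖w‖‖ ≤ ‖w - q‖ := by
    rw [← ofReal_sub, norm_real, Real.norm_eq_abs, abs_sub_comm]
    simpa [abs_of_nonneg hq] using abs_norm_sub_norm_le w (q : ℂ)
  calc ‖w - ‖w‖‖ = ‖(w - q) + (q - ‖w‖)‖ := by ring_nf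
    _ ≤ ‖w - q‖ + ‖(q : ℂ) - ‖w‖‖ := norm_add_le _ _
    _ ≤ 2 * ‖w - q‖ := by linarith

lemma norm_mul_angle_le_pi_mul_norm_sub (w : ℂ) {q : ℝ} (hq : 0 ≤ q) :
    ‖w‖ * angle w 1 ≤ π * ‖w - q‖ := by
  rcases eq_or_ne w 0 with rfl | hw
  · rw [norm_zero, zero_mul]; positivity
  have hnorm : 0 < ‖w‖ := norm_pos_iff.mpr hw
  have hnorm' : (‖w‖ : ℂ) ≠ 0 := by exact_mod_cast hnorm.ne'
  have hangle : angle (w / ‖w‖) 1 = angle w 1 := by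
    rw [div_eq_inv_mul, ← ofReal_inv, ← real_smul, angle_smul_left_of_pos _ _ (by positivity)]
  have hchord : ‖w / ‖w‖ - 1‖ = ‖w - ‖w‖‖ / ‖w‖ := by
    rw [div_sub_one hnorm', norm_div, norm_real, Real.norm_of_nonneg hnorm.le]
  have key := mul_angle_le_norm_sub (x := w / ‖w‖) (by simp [hnorm.ne']) norm_one
  rw [hangle, hchord, le_div_iff₀ hnorm] at key
  calc ‖w‖ * angle w 1 = π / 2 * (2 / π * angle w 1 * ‖w‖) := by field_simp
    _ ≤ π / 2 * (2 * ‖w - q‖) := by grw [key, norm_sub_norm_le_two_mul_norm_sub w hq]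
    _ = π * ‖w - q‖ := by ring

lemma norm_mul_norm_mul_sub_angle_le (z η : ℂ) {q : ℝ} (hq : 0 ≤ q) :
    ‖z‖ * ‖η‖ * (angle z 1 - angle 1 η) ≤ π * ‖z * η - q‖ := by
  rcases eq_or_ne z 0 with rfl | hz
  · rw [norm_zero, zero_mul, zero_mul]; positivity
  have hrot : angle z (z * η) = angle 1 η := by simpa using angle_mul_left hz 1 η
  have htri := angle_le_angle_add_angle z (z * η) 1
  calc ‖z‖ * ‖η‖ * (angle z 1 - angle 1 η) ≤ ‖z * η‖ * angle (z * η) 1 := by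
        rw [norm_mul]; gcongr; linarith
    _ ≤ π * ‖z * η - q‖ := norm_mul_angle_le_pi_mul_norm_sub _ hq

lemma angle_one_le_arctan {a t s : ℝ} (ha : 0 < a) (ht : |t| ≤ s * a) :
    angle 1 (a + t * I) ≤ Real.arctan s := by
  have hs : 0 ≤ s := nonneg_of_mul_nonneg_left ((abs_nonneg t).trans ht) ha
  have hnorm : ‖(a : ℂ) + t * I‖ ≤ a * √(1 + s ^ 2) := by
    rw [norm_add_mul_I, Real.sqrt_le_left (by positivity), mul_pow, Real.sq_sqrt (by positivity)]
    nlinarith [sq_abs t, abs_nonneg t]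
  have hpos : 0 < ‖(a : ℂ) + t * I‖ := by
    rw [norm_add_mul_I]; positivity
  have hcos : Real.cos (Real.arctan s) ≤ a / ‖(a : ℂ) + t * I‖ := by
    rw [Real.cos_arctan, le_div_iff₀ hpos, div_mul_eq_mul_div, div_le_iff₀ (by positivity),
      one_mul]
    exact hnorm
  calc angle 1 (a + t * I) = Real.arccos (a / ‖(a : ℂ) + t * I‖) := by
        simp [angle, Complex.inner]
    _ ≤ Real.arccos (Real.cos (Real.arctan s)) := Real.arccos_le_arccos hcos
    _ = Real.arctan s := Real.arccos_cos (Real.arctan_nonneg.mpr hs)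
          ((Real.arctan_lt_pi_div_two s).le.trans (by linarith [Real.pi_pos]))

end Complex

namespace ContinuousLinearMap

variable {𝕜 E : Type*} [RCLike 𝕜] [NormedAddCommGroup E] [InnerProductSpace 𝕜 E] [CompleteSpace E]

lemma isUnit_and_norm_inverse_le_of_forall_le_norm_inner_map (f : E →L[𝕜] E) {c : ℝ}
    (hc : 0 < c) (h : ∀ x, ‖x‖ ^ 2 * c ≤ ‖inner 𝕜 (f x) x‖) :
    IsUnit f ∧ ‖Ring.inverse f‖ ≤ c⁻¹ := by
  lift c to NNReal using hc.le
  have hc' : 0 < c := by exact_mod_cast hc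
  obtain ⟨u, rfl⟩ := isUnit_of_forall_le_norm_inner_map f hc' h
  refine ⟨u.isUnit, ?_⟩
  rw [Ring.inverse_unit]
  refine opNorm_le_bound _ (by positivity) fun y ↦ ?_
  have hy : (u : E →L[𝕜] E) ((↑u⁻¹ : E →L[𝕜] E) y) = y := by
    simpa only [mul_apply_eq_comp, one_apply_eq_self] using DFunLike.congr_fun u.mul_inv y
  simpa [hy] using
    bound_of_antilipschitz _ (antilipschitz_of_forall_le_inner_map _ hc' h) ((↑u⁻¹ : E →L[𝕜] E) y)

end ContinuousLinearMap

lemma abs_re_inner_apply_self_le {V : Type*} [NormedAddCommGroup V] [InnerProductSpace ℂ V]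
    (T : V →L[ℂ] V) (x : V) : |(inner ℂ x (T x)).re| ≤ ‖T‖ * ‖x‖ ^ 2 := by
  calc |(inner ℂ x (T x)).re| ≤ ‖x‖ * ‖T x‖ := (abs_re_le_norm _).trans (norm_inner_le_norm _ _)
    _ ≤ ‖x‖ * (‖T‖ * ‖x‖) := by gcongr; exact T.le_opNorm x
    _ = ‖T‖ * ‖x‖ ^ 2 := by ring

section
variable {V : Type*} [NormedAddCommGroup V] [InnerProductSpace ℂ V] [CompleteSpace V]

lemma IsSelfAdjoint.ofReal_re_inner_apply_self {T : V →L[ℂ] V} (hT : IsSelfAdjoint T) (x : V) :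
    ((inner ℂ x (T x)).re : ℂ) = inner ℂ x (T x) := by
  have h := hT.isSymmetric.coe_re_inner_apply_self x
  rw [hT.isSymmetric x x] at h
  exact h

lemma inner_smul_one_add_I_smul_sub_apply {T Q : V →L[ℂ] V} (hT : IsSelfAdjoint T)
    (hQ : IsSelfAdjoint Q) (z : ℂ) (x : V) :
    inner ℂ x ((z • (1 + I • T) - Q) x) =
      z * (↑(‖x‖ ^ 2) + (inner ℂ x (T x)).re * I) - (inner ℂ x (Q x)).re := by
  simp only [smul_add, sub_apply, add_apply, smul_apply, one_apply_eq_self, inner_sub_right,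
    inner_add_right, inner_smul_right, inner_self_eq_norm_sq_to_K, coe_algebraMap, ofReal_pow]
  rw [hT.ofReal_re_inner_apply_self, hQ.ofReal_re_inner_apply_self]
  ring

lemma isUnit_one_add_I_smul {T : V →L[ℂ] V} (hT : IsSelfAdjoint T) :
    IsUnit (1 + I • T) := by
  have hI : I ∉ spectrum ℂ T := fun h ↦ by simpa using congrArg im (hT.mem_spectrum_eq_re h)
  have hfac : 1 + I • T = algebraMap ℂ (V →L[ℂ] V) (-I) * (algebraMap ℂ _ I - T) := by
    rw [mul_sub, ← map_mul, Algebra.algebraMap_eq_smul_one, Algebra.algebraMap_eq_smul_one,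
      smul_mul_assoc, one_mul]
    simp
  rw [hfac]
  exact ((Ne.isUnit (neg_ne_zero.mpr I_ne_zero)).map _).mul (spectrum.notMem_iff.mp hI)

lemma le_norm_inner_smul_one_add_I_smul_sub_apply {T Q : V →L[ℂ] V} (hT : IsSelfAdjoint T)
    (hQ : IsSelfAdjoint Q) (hQnn : ∀ u : V, 0 ≤ (inner ℂ u (Q u) : ℂ).re) {z : ℂ}
    (hz : Real.arctan ‖T‖ ≤ angle z 1) (x : V) :
    ‖x‖ ^ 2 * (‖z‖ * (angle z 1 - Real.arctan ‖T‖) / π) ≤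
      ‖inner ℂ ((z • (1 + I • T) - Q) x) x‖ := by
  rcases eq_or_ne x 0 with rfl | hx
  · simp
  set η : ℂ := ↑(‖x‖ ^ 2) + (inner ℂ x (T x)).re * I
  have ha : 0 < ‖x‖ ^ 2 := by positivity
  have hη : angle 1 η ≤ Real.arctan ‖T‖ := angle_one_le_arctan ha (abs_re_inner_apply_self_le T x)
  have hnorm : ‖x‖ ^ 2 ≤ ‖η‖ := by
    rw [norm_add_mul_I]; exact Real.le_sqrt_of_sq_le (le_add_of_nonneg_right (sq_nonneg _))
  rw [norm_inner_symm, inner_smul_one_add_I_smul_sub_apply hT hQ]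
  calc ‖x‖ ^ 2 * (‖z‖ * (angle z 1 - Real.arctan ‖T‖) / π)
      = ‖z‖ * ‖x‖ ^ 2 * (angle z 1 - Real.arctan ‖T‖) / π := by ring
    _ ≤ ‖z‖ * ‖η‖ * (angle z 1 - angle 1 η) / π := by gcongr
    _ ≤ ‖z * η - (inner ℂ x (Q x)).re‖ := by
        rw [div_le_iff₀ Real.pi_pos, mul_comm _ π]
        exact norm_mul_norm_mul_sub_angle_le z η (hQnn x)

lemma isUnit_and_norm_smul_resolvent_le {T Q : V →L[ℂ] V} (hT : IsSelfAdjoint T)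
    (hQ : IsSelfAdjoint Q) (hQnn : ∀ u : V, 0 ≤ (inner ℂ u (Q u) : ℂ).re) {z : ℂ} (hz0 : z ≠ 0)
    (hz : Real.arctan ‖T‖ < angle z 1) :
    IsUnit (z • 1 - Q * Ring.inverse (1 + I • T)) ∧
      ‖z • Ring.inverse (z • 1 - Q * Ring.inverse (1 + I • T))‖ ≤
        π * ‖1 + I • T‖ / (angle z 1 - Real.arctan ‖T‖) := by
  set G : V →L[ℂ] V := 1 + I • T
  have hG : IsUnit G := isUnit_one_add_I_smul hT
  have hnorm : 0 < ‖z‖ := norm_pos_iff.mpr hz0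
  have hgap : 0 < angle z 1 - Real.arctan ‖T‖ := sub_pos.mpr hz
  have hc : 0 < ‖z‖ * (angle z 1 - Real.arctan ‖T‖) / π := by positivity
  obtain ⟨hB, hBinv⟩ := (z • G - Q).isUnit_and_norm_inverse_le_of_forall_le_norm_inner_map hc
    (le_norm_inner_smul_one_add_I_smul_sub_apply hT hQ hQnn hz.le)
  have hfac : z • 1 - Q * Ring.inverse G = (z • G - Q) * Ring.inverse G := by
    rw [sub_mul, smul_mul_assoc, Ring.mul_inverse_cancel _ hG]
  refine ⟨hfac ▸ hB.mul hG.ringInverse, ?_⟩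
  rw [hfac, Ring.inverse_mul (Or.inl hB), Ring.inverse_inverse hG]
  calc ‖z • (G * Ring.inverse (z • G - Q))‖ ≤ ‖z‖ * (‖G‖ * ‖Ring.inverse (z • G - Q)‖) := by
        rw [norm_smul]; gcongr; exact norm_mul_le _ _
    _ ≤ ‖z‖ * (‖G‖ * (‖z‖ * (angle z 1 - Real.arctan ‖T‖) / π)⁻¹) := by gcongr
    _ = π * ‖G‖ / (angle z 1 - Real.arctan ‖T‖) := by field_simp

end

lemma ne_zero_and_lt_angle_one_of_notMem_sector {θ : ℝ} {z : ℂ} (hz : z ∉ sector θ) :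
    z ≠ 0 ∧ θ < angle z 1 := by
  simp only [sector, Set.mem_ofPred_eq, not_or, not_le] at hz
  exact ⟨hz.1, (angle_one_right hz.1).symm ▸ hz.2⟩

/-- Let `V` be a complex Hilbert space, `T, Q` bounded selfadjoint operators
on `V` with `Q` nonnegative, and set `A := Q(I + iT)⁻¹`. Then `A` is sectorial of angle
strictly less than `π/2`: there exists `θ ∈ (0, π/2)` such that the spectrum of `A` is
contained in the closed sector `Σ_θ`, and for every `θ' ∈ (θ, π)` one has
`sup{‖z(zI − A)⁻¹‖ : z ∈ ℂ \ Σ_{θ'}, z ≠ 0} < ∞`. -/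
theorem sectorial_of_selfAdjoint_nonneg
    {V : Type*} [NormedAddCommGroup V] [InnerProductSpace ℂ V] [CompleteSpace V]
    (T Q : V →L[ℂ] V) (hT : IsSelfAdjoint T) (hQ : IsSelfAdjoint Q)
    (hQnn : ∀ u : V, 0 ≤ (inner ℂ u (Q u) : ℂ).re)
    (A : V →L[ℂ] V) (hA : A = Q * Ring.inverse ((1 : V →L[ℂ] V) + Complex.I • T)) :
    ∃ θ ∈ Set.Ioo (0 : ℝ) (Real.pi / 2),
      spectrum ℂ A ⊆ sector θ ∧
      ∀ θ' ∈ Set.Ioo θ Real.pi, ∃ M : ℝ,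
        ∀ z : ℂ, z ∉ sector θ' → z ≠ 0 →
          IsUnit (z • (1 : V →L[ℂ] V) - A) ∧
          ‖z • Ring.inverse (z • (1 : V →L[ℂ] V) - A)‖ ≤ M := by
  subst hA
  set φ := Real.arctan ‖T‖
  have hφθ : φ < Real.arctan (‖T‖ + 1) := Real.arctan_strictMono (lt_add_one _)
  refine ⟨Real.arctan (‖T‖ + 1), ⟨Real.arctan_pos.mpr (by positivity),
    Real.arctan_lt_pi_div_two _⟩, fun z hz ↦ ?_, fun θ' hθ' ↦ ?_⟩
  · by_contra hzθ
    obtain ⟨hz0, hθz⟩ := ne_zero_and_lt_angle_one_of_notMem_sector hzθ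
    refine spectrum.mem_iff.mp hz ?_
    rw [Algebra.algebraMap_eq_smul_one]
    exact (isUnit_and_norm_smul_resolvent_le hT hQ hQnn hz0 (hφθ.trans hθz)).1
  · refine ⟨π * ‖1 + I • T‖ / (θ' - φ), fun z hz hz0 ↦ ?_⟩
    have hθz := (ne_zero_and_lt_angle_one_of_notMem_sector hz).2
    have hgap : 0 < θ' - φ := by linarith [hθ'.1]
    obtain ⟨hunit, hbound⟩ := isUnit_and_norm_smul_resolvent_le hT hQ hQnn hz0 (by linarith)
    exact ⟨hunit, hbound.trans (by gcongr)⟩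
end

section
/- Let V be a complex Hilbert space and A ∈ L(V) a bounded operator such that for every z ∈ ℂ with Re z ≤ 0 and z ≠ 0 the operator zI − A is boundedly invertible with ‖z(zI − A)⁻¹‖ ≤ M for a fixed constant M ≥ 0. Then I + A is boundedly invertible, and the Cayley transform C := (I − A)(I + A)⁻¹ satisfies: for every z ∈ ℂ with |z| > 1, zI − C is boundedly invertible and ‖(z − 1)(zI − C)⁻¹‖ ≤ M·‖I + A‖. -/
/-!
The Möbius map `z ↦ w := (1 - z) / (1 + z)` sends the exterior of the unit disc into the open
left half-plane, and `z - C = -(1 + z) (w - A) (1 + A)⁻¹`. Hence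
`(z - 1) (z - C)⁻¹ = (1 + A) · w (w - A)⁻¹`, whose norm is at most `‖1 + A‖ M`.
-/

theorem Ring.inverse_smul {𝕜 R : Type*} [Field 𝕜] [Ring R] [Algebra 𝕜 R] (c : 𝕜) (x : R) :
    Ring.inverse (c • x) = c⁻¹ • Ring.inverse x := by
  rcases eq_or_ne c 0 with rfl | hc
  · simp
  have hunit : IsUnit (c • x) ↔ IsUnit x := isUnit_smul_iff (Units.mk0 c hc) x
  by_cases hx : IsUnit x
  · rw [← mul_one (Ring.inverse _), Ring.inverse_mul_eq_iff_eq_mul _ _ _ (hunit.mpr hx),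
      smul_mul_smul_comm, mul_inv_cancel₀ hc, Ring.mul_inverse_cancel x hx, one_smul]
  · rw [Ring.inverse_non_unit _ hx, Ring.inverse_non_unit _ (hunit.not.mpr hx), smul_zero]

theorem Complex.one_add_ne_zero_of_one_lt_norm {z : ℂ} (hz : 1 < ‖z‖) : 1 + z ≠ 0 := fun h => by
  rw [eq_neg_of_add_eq_zero_right h, norm_neg, norm_one] at hz
  exact hz.false

theorem Complex.re_one_sub_div_one_add_neg {z : ℂ} (hz : 1 < ‖z‖) : ((1 - z) / (1 + z)).re < 0 := by
  have hnormSq : 1 < normSq z := by rw [← Complex.sq_norm]; nlinarith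
  rw [div_re, ← add_div]
  refine div_neg_of_neg_of_pos ?_ (normSq_pos.mpr (one_add_ne_zero_of_one_lt_norm hz))
  simp only [normSq_apply, sub_re, sub_im, add_re, add_im, one_re, one_im] at hnormSq ⊢
  nlinarith

section Cayley

variable {𝕜 R : Type*} [Field 𝕜] [Ring R] [Algebra 𝕜 R]

noncomputable def cayley (a : R) : R := (1 - a) * Ring.inverse (1 + a)

theorem smul_one_sub_cayley {a : R} (ha : IsUnit (1 + a)) {z : 𝕜} (hz : 1 + z ≠ 0) :
    z • 1 - cayley a = (-(1 + z)) • (((1 - z) / (1 + z)) • 1 - a) * Ring.inverse (1 + a) := by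
  have : -(1 + z) * ((1 - z) / (1 + z)) = z - 1 := by field_simp; ring
  rw [cayley, smul_sub, smul_smul, this]
  nth_rw 1 [← Ring.mul_inverse_cancel _ ha]
  simp only [sub_mul, add_mul, smul_mul_assoc, one_mul]
  module

theorem isUnit_smul_one_sub_cayley {a : R} (ha : IsUnit (1 + a)) {z : 𝕜} (hz : 1 + z ≠ 0)
    (hw : IsUnit (((1 - z) / (1 + z)) • 1 - a)) : IsUnit (z • 1 - cayley a) := by
  rw [smul_one_sub_cayley ha hz]
  exact ((isUnit_smul_iff (Units.mk0 _ (neg_ne_zero.mpr hz)) _).mpr hw).mul ha.ringInverse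

theorem smul_inverse_smul_one_sub_cayley {a : R} (ha : IsUnit (1 + a)) {z : 𝕜} (hz : 1 + z ≠ 0) :
    (z - 1) • Ring.inverse (z • 1 - cayley a) =
      (1 + a) * ((1 - z) / (1 + z)) • Ring.inverse (((1 - z) / (1 + z)) • 1 - a) := by
  have : (z - 1) * (-(1 + z))⁻¹ = (1 - z) / (1 + z) := by field_simp; ring
  rw [smul_one_sub_cayley ha hz, Ring.inverse_mul (Or.inr ha.ringInverse), Ring.inverse_inverse ha,
    Ring.inverse_smul, mul_smul_comm, smul_smul, this, mul_smul_comm]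

end Cayley

theorem cayley_transform_ritt_bound_general
    {V : Type*} [NormedAddCommGroup V] [InnerProductSpace ℂ V]
    (A : V →L[ℂ] V) (M : ℝ)
    (h : ∀ z : ℂ, z.re ≤ 0 → z ≠ 0 →
      IsUnit (z • (1 : V →L[ℂ] V) - A) ∧
      ‖z • Ring.inverse (z • (1 : V →L[ℂ] V) - A)‖ ≤ M) :
    IsUnit ((1 : V →L[ℂ] V) + A) ∧
    ∀ z : ℂ, 1 < ‖z‖ →
      IsUnit (z • (1 : V →L[ℂ] V) -
        ((1 : V →L[ℂ] V) - A) * Ring.inverse ((1 : V →L[ℂ] V) + A)) ∧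
      ‖(z - 1) • Ring.inverse (z • (1 : V →L[ℂ] V) -
        ((1 : V →L[ℂ] V) - A) * Ring.inverse ((1 : V →L[ℂ] V) + A))‖ ≤
          M * ‖(1 : V →L[ℂ] V) + A‖ := by
  have hA : IsUnit (1 + A) := by
    have := (h (-1) (by norm_num) (by norm_num)).1
    rwa [neg_one_smul, ← neg_add', IsUnit.neg_iff] at this
  refine ⟨hA, fun z hz => ?_⟩
  have hz1 := Complex.one_add_ne_zero_of_one_lt_norm hz
  have hw := Complex.re_one_sub_div_one_add_neg hz
  obtain ⟨hwA, hbound⟩ := h _ hw.le (fun h0 => by simp [h0] at hw)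
  refine ⟨isUnit_smul_one_sub_cayley hA hz1 hwA, ?_⟩
  calc ‖(z - 1) • Ring.inverse (z • 1 - cayley A)‖
      = ‖(1 + A) * ((1 - z) / (1 + z)) • Ring.inverse (((1 - z) / (1 + z)) • 1 - A)‖ := by
        rw [smul_inverse_smul_one_sub_cayley hA hz1]
    _ ≤ ‖1 + A‖ * M := (norm_mul_le _ _).trans (mul_le_mul_of_nonneg_left hbound (norm_nonneg _))
    _ = M * ‖1 + A‖ := mul_comm _ _

/-- Let `V` be a complex Hilbert space and `A ∈ L(V)` a bounded operator
such that for every `z ∈ ℂ` with `Re z ≤ 0` and `z ≠ 0` the operator `zI − A` is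
boundedly invertible with `‖z(zI − A)⁻¹‖ ≤ M` for a fixed constant `M ≥ 0`. Then `I + A`
is boundedly invertible, and the Cayley transform `C := (I − A)(I + A)⁻¹` satisfies:
for every `z ∈ ℂ` with `|z| > 1`, `zI − C` is boundedly invertible and
`‖(z − 1)(zI − C)⁻¹‖ ≤ M·‖I + A‖`. -/
theorem cayley_transform_ritt_bound
    {V : Type*} [NormedAddCommGroup V] [InnerProductSpace ℂ V] [CompleteSpace V]
    (A : V →L[ℂ] V) (M : ℝ) (hM : 0 ≤ M)
    (h : ∀ z : ℂ, z.re ≤ 0 → z ≠ 0 →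
      IsUnit (z • (1 : V →L[ℂ] V) - A) ∧
      ‖z • Ring.inverse (z • (1 : V →L[ℂ] V) - A)‖ ≤ M) :
    IsUnit ((1 : V →L[ℂ] V) + A) ∧
    ∀ z : ℂ, 1 < ‖z‖ →
      IsUnit (z • (1 : V →L[ℂ] V) -
        ((1 : V →L[ℂ] V) - A) * Ring.inverse ((1 : V →L[ℂ] V) + A)) ∧
      ‖(z - 1) • Ring.inverse (z • (1 : V →L[ℂ] V) -
        ((1 : V →L[ℂ] V) - A) * Ring.inverse ((1 : V →L[ℂ] V) + A))‖ ≤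
          M * ‖(1 : V →L[ℂ] V) + A‖ :=
  cayley_transform_ritt_bound_general A M h
end

section
/- Let V be a complex Hilbert space and T, Q bounded selfadjoint operators on V with Q nonnegative, and assume that T and Q commute (TQ = QT). Then Q(I + iT) is accretive, and moreover for every u ∈ V one has Re⟨Q(I + iT)⁻¹u, u⟩ ≥ 0 and |Im⟨Q(I + iT)⁻¹u, u⟩| ≤ ‖T‖·Re⟨Q(I + iT)⁻¹u, u⟩; in particular Q(I + iT)⁻¹ is θ-accretive with θ = arctan‖T‖. -/
open Complex ContinuousLinearMap
open scoped InnerProductSpace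

lemma mem_sector_arctan_of_abs_im_le {z : ℂ} {c : ℝ} (hre : 0 ≤ z.re)
    (him : |z.im| ≤ c * z.re) : z ∈ sector (Real.arctan c) := by
  rcases hre.eq_or_lt with hre0 | hrepos
  · left
    rw [← hre0, mul_zero, abs_nonpos_iff] at him
    exact Complex.ext hre0.symm him
  · right
    have hbound := abs_lt.mp (abs_arg_lt_pi_div_two_iff.mpr (Or.inl hrepos))
    have harg : z.arg = Real.arctan (z.im / z.re) := by
      rw [← tan_arg, Real.arctan_tan hbound.1 hbound.2]
    have hq : |z.im / z.re| ≤ c := by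
      rwa [abs_div, abs_of_pos hrepos, div_le_iff₀ hrepos]
    rw [harg, abs_le, ← Real.arctan_neg]
    exact ⟨Real.arctan_mono (abs_le.mp hq).1, Real.arctan_mono (abs_le.mp hq).2⟩

section CStarAlgebra

variable {A : Type*} [CStarAlgebra A]

lemma IsSelfAdjoint.isUnit_one_add_I_smul {a : A} (ha : IsSelfAdjoint a) :
    IsUnit (1 + I • a) := by
  have hI : IsUnit (algebraMap ℂ A I - a) :=
    spectrum.notMem_iff.mp fun h ↦ by simpa using ha.im_eq_zero_of_mem_spectrum h
  have hfac : 1 + I • a = algebraMap ℂ A (-I) * (algebraMap ℂ A I - a) := by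
    rw [mul_sub, ← map_mul, neg_mul, I_mul_I, neg_neg, map_one, ← Algebra.smul_def, neg_smul,
      sub_neg_eq_add]
  rw [hfac]
  exact ((isUnit_iff_ne_zero.mpr (neg_ne_zero.mpr I_ne_zero)).map _).mul hI

variable [PartialOrder A] [StarOrderedRing A]

lemma Commute.mul_le_norm_smul {a b : A} (ha : IsSelfAdjoint a) (hb : 0 ≤ b)
    (hab : Commute a b) : a * b ≤ ‖a‖ • b := by
  have h := Commute.mul_nonneg (sub_nonneg.mpr ha.le_algebraMap_norm_self) hb
    ((Algebra.commute_algebraMap_left ‖a‖ b).sub_left hab)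
  rwa [sub_mul, ← Algebra.smul_def, sub_nonneg] at h

lemma Commute.neg_norm_smul_le_mul {a b : A} (ha : IsSelfAdjoint a) (hb : 0 ≤ b)
    (hab : Commute a b) : -(‖a‖ • b) ≤ a * b := by
  simpa [neg_le, norm_neg] using hab.neg_left.mul_le_norm_smul ha.neg hb

end CStarAlgebra

namespace ContinuousLinearMap

variable {V : Type*} [NormedAddCommGroup V] [InnerProductSpace ℂ V]

lemma re_inner_apply_le_of_le {R S : V →L[ℂ] V} (h : R ≤ S) (u : V) :
    (⟪u, R u⟫_ℂ).re ≤ (⟪u, S u⟫_ℂ).re := by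
  have := ((le_def R S).mp h).re_inner_nonneg_right u
  simpa [inner_sub_right, sub_nonneg] using this

lemma inner_mul_one_add_I_smul_apply (Q T : V →L[ℂ] V) (u : V) :
    ⟪u, (Q * (1 + I • T)) u⟫_ℂ = ⟪u, Q u⟫_ℂ + I * ⟪u, (Q * T) u⟫_ℂ := by
  simp

variable [CompleteSpace V]

lemma im_inner_apply_self_eq_zero {R : V →L[ℂ] V} (hR : IsSelfAdjoint R) (u : V) :
    (⟪u, R u⟫_ℂ).im = 0 := by
  simpa using hR.isSymmetric.im_inner_self_apply u

lemma nonneg_of_re_inner_apply_nonneg {Q : V →L[ℂ] V} (hQ : IsSelfAdjoint Q)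
    (h : ∀ u, 0 ≤ (⟪u, Q u⟫_ℂ).re) : 0 ≤ Q :=
  (nonneg_iff_isPositive Q).mpr ⟨hQ.isSymmetric, fun u ↦ by
    simpa [reApplyInnerSelf, inner_re_symm (𝕜 := ℂ) (Q u)] using h u⟩

lemma inner_one_add_I_smul_apply_left {T : V →L[ℂ] V} (hT : IsSelfAdjoint T) (Q : V →L[ℂ] V)
    (v : V) : ⟪(1 + I • T) v, Q v⟫_ℂ = ⟪v, Q v⟫_ℂ - I * ⟪v, (T * Q) v⟫_ℂ := by
  have hsymm : ⟪T v, Q v⟫_ℂ = ⟪v, (T * Q) v⟫_ℂ := by simpa using hT.isSymmetric v (Q v)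
  simp only [add_apply, one_apply_eq_self, smul_apply, inner_add_left, inner_smul_left, conj_I,
    hsymm]
  ring

lemma abs_re_inner_mul_apply_le {T Q : V →L[ℂ] V} (hT : IsSelfAdjoint T) (hQ : 0 ≤ Q)
    (hTQ : Commute T Q) (u : V) :
    |(⟪u, (T * Q) u⟫_ℂ).re| ≤ ‖T‖ * (⟪u, Q u⟫_ℂ).re := by
  have hre : (⟪u, (‖T‖ • Q) u⟫_ℂ).re = ‖T‖ * (⟪u, Q u⟫_ℂ).re := by
    simp [smul_apply]
  have hlower := re_inner_apply_le_of_le (hTQ.neg_norm_smul_le_mul hT hQ) u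
  have hupper := re_inner_apply_le_of_le (hTQ.mul_le_norm_smul hT hQ) u
  rw [neg_apply, inner_neg_right, neg_re, hre] at hlower
  rw [hre] at hupper
  exact abs_le.mpr ⟨by linarith, hupper⟩

end ContinuousLinearMap

/-- Let `V` be a complex Hilbert space and `T, Q` bounded selfadjoint
operators on `V` with `Q` nonnegative, and assume `TQ = QT`. Then `Q(I + iT)` is
accretive, and moreover for every `u ∈ V` one has `Re⟨Q(I + iT)⁻¹u, u⟩ ≥ 0` and
`|Im⟨Q(I + iT)⁻¹u, u⟩| ≤ ‖T‖·Re⟨Q(I + iT)⁻¹u, u⟩`; in particular `Q(I + iT)⁻¹` is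
`θ`-accretive with `θ = arctan‖T‖`.
(Here `⟨·,·⟩` is linear in the first variable, i.e. `⟨Au, u⟩ = inner u (A u)` in
Mathlib's convention.) -/
theorem accretive_of_commuting_selfAdjoint
    {V : Type*} [NormedAddCommGroup V] [InnerProductSpace ℂ V] [CompleteSpace V]
    (T Q : V →L[ℂ] V) (hT : IsSelfAdjoint T) (hQ : IsSelfAdjoint Q)
    (hQnn : ∀ u : V, 0 ≤ (inner ℂ u (Q u) : ℂ).re)
    (hcomm : T * Q = Q * T)
    (A : V →L[ℂ] V) (hA : A = Q * Ring.inverse ((1 : V →L[ℂ] V) + Complex.I • T)) :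
    (∀ u : V, 0 ≤ (inner ℂ u ((Q * ((1 : V →L[ℂ] V) + Complex.I • T)) u) : ℂ).re) ∧
    (∀ u : V, 0 ≤ (inner ℂ u (A u) : ℂ).re ∧
      |(inner ℂ u (A u) : ℂ).im| ≤ ‖T‖ * (inner ℂ u (A u) : ℂ).re) ∧
    (∀ u : V, (inner ℂ u (A u) : ℂ) ∈ sector (Real.arctan ‖T‖)) := by
  have hQ0 : 0 ≤ Q := nonneg_of_re_inner_apply_nonneg hQ hQnn
  have hQT : IsSelfAdjoint (Q * T) := (hQ.commute_iff hT).mp hcomm.symm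
  have hTQ : IsSelfAdjoint (T * Q) := (hT.commute_iff hQ).mp hcomm
  have hD : IsUnit (1 + I • T) := hT.isUnit_one_add_I_smul
  have hA_bound (u : V) :
      0 ≤ (⟪u, A u⟫_ℂ).re ∧ |(⟪u, A u⟫_ℂ).im| ≤ ‖T‖ * (⟪u, A u⟫_ℂ).re := by
    obtain ⟨v, rfl⟩ : ∃ v, (1 + I • T) v = u :=
      ⟨Ring.inverse (1 + I • T) u, by
        rw [← mul_apply_eq_comp, Ring.mul_inverse_cancel _ hD, one_apply_eq_self]⟩
    have hAv : A ((1 + I • T) v) = Q v := by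
      rw [hA, mul_apply_eq_comp, ← mul_apply_eq_comp (Ring.inverse _),
        Ring.inverse_mul_cancel _ hD, one_apply_eq_self]
    rw [hAv, inner_one_add_I_smul_apply_left hT]
    simp only [sub_re, sub_im, mul_re, mul_im, I_re, I_im, im_inner_apply_self_eq_zero hQ,
      im_inner_apply_self_eq_zero hTQ, zero_mul, one_mul, mul_zero, sub_zero, zero_add, zero_sub,
      abs_neg]
    exact ⟨hQnn v, abs_re_inner_mul_apply_le hT hQ0 hcomm v⟩
  refine ⟨fun u ↦ ?_, hA_bound, fun u ↦ (hA_bound u).elim mem_sector_arctan_of_abs_im_le⟩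
  rw [inner_mul_one_add_I_smul_apply]
  simpa only [add_re, mul_re, I_re, I_im, im_inner_apply_self_eq_zero hQT, zero_mul, one_mul,
    sub_zero, add_zero] using hQnn u
end

section
/- Let V be a complex Hilbert space and T, Q bounded selfadjoint operators on V with Q nonnegative and injective. Then there exists a positive invertible operator S on V such that QS(I + iT) is accretive if and only if the operator C := (I − Q + iT)(I + Q + iT)⁻¹ is similar to a contraction. -/
/-!
Write `D = I + Q + iT`, `N = I - Q + iT`, so that `C = N D⁻¹`, and `A = I + iT`, so that
`D = A + Q`, `N = A - Q`. Positive invertible operators are exactly the `S = R* R` with `R`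
invertible (via the square root), and for such `S` polarization gives
`4 Re ⟨u, QSAu⟩ = ‖R D u‖² - ‖R N u‖²`.
Hence `QSA` is accretive iff `‖R N u‖ ≤ ‖R D u‖` for all `u`, i.e. (substituting `u = D⁻¹ v`)
iff `R C R⁻¹` is a contraction. `D` is invertible because `Re ⟨u, D u⟩ ≥ ‖u‖²`.
-/

/-- An operator `S` is positive and invertible if it is selfadjoint and
`⟨Su, u⟩ ≥ η‖u‖²` for some `η > 0`. -/
def PosInvertible {V : Type*} [NormedAddCommGroup V] [InnerProductSpace ℂ V]
    [CompleteSpace V] (S : V →L[ℂ] V) : Prop :=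
  IsSelfAdjoint S ∧ ∃ η > (0 : ℝ), ∀ u : V, η * ‖u‖ ^ 2 ≤ (inner ℂ u (S u) : ℂ).re

open ContinuousLinearMap RCLike
open scoped InnerProductSpace

section Normed

variable {𝕜 E : Type*} [NontriviallyNormedField 𝕜] [NormedAddCommGroup E] [NormedSpace 𝕜 E]

theorem IsUnit.apply_inverse_apply {R : E →L[𝕜] E} (hR : IsUnit R) (v : E) :
    R (Ring.inverse R v) = v :=
  DFunLike.congr_fun (Ring.mul_inverse_cancel R hR) v

theorem IsUnit.inverse_apply_apply {R : E →L[𝕜] E} (hR : IsUnit R) (v : E) :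
    Ring.inverse R (R v) = v :=
  DFunLike.congr_fun (Ring.inverse_mul_cancel R hR) v

theorem IsUnit.forall_mul_inverse_apply_iff {D : E →L[𝕜] E} (hD : IsUnit D) (N : E →L[𝕜] E)
    (P : E → E → Prop) : (∀ v, P ((N * Ring.inverse D) v) v) ↔ ∀ u, P (N u) (D u) := by
  refine ⟨fun h u => ?_, fun h v => ?_⟩
  · simpa only [mul_apply_eq_comp, hD.inverse_apply_apply] using h (D u)
  · simpa only [mul_apply_eq_comp, hD.apply_inverse_apply] using h (Ring.inverse D v)

theorem IsUnit.norm_mul_mul_inverse_le_one_iff {R : E →L[𝕜] E} (hR : IsUnit R) (C : E →L[𝕜] E) :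
    ‖R * C * Ring.inverse R‖ ≤ 1 ↔ ∀ v, ‖R (C v)‖ ≤ ‖R v‖ := by
  constructor
  · intro h v
    calc ‖R (C v)‖ = ‖(R * C * Ring.inverse R) (R v)‖ := by
          simp only [mul_apply_eq_comp, hR.inverse_apply_apply]
      _ ≤ ‖R * C * Ring.inverse R‖ * ‖R v‖ := le_opNorm _ _
      _ ≤ ‖R v‖ := mul_le_of_le_one_left (norm_nonneg _) h
  · intro h
    refine opNorm_le_bound _ zero_le_one fun u => ?_
    simpa only [mul_apply_eq_comp, hR.apply_inverse_apply, one_mul] using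
      h (Ring.inverse R u)

theorem IsUnit.exists_pos_mul_norm_sq_le_norm_apply_sq {R : E →L[𝕜] E} (hR : IsUnit R) :
    ∃ η > (0 : ℝ), ∀ u, η * ‖u‖ ^ 2 ≤ ‖R u‖ ^ 2 := by
  set K := ‖Ring.inverse R‖ + 1
  have hK : 0 < K := by positivity
  refine ⟨(K ^ 2)⁻¹, by positivity, fun u => ?_⟩
  have hu : ‖u‖ ≤ K * ‖R u‖ :=
    calc ‖u‖ = ‖Ring.inverse R (R u)‖ := by rw [hR.inverse_apply_apply]
      _ ≤ ‖Ring.inverse R‖ * ‖R u‖ := le_opNorm _ _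
      _ ≤ K * ‖R u‖ := by gcongr; linarith
  rw [inv_mul_le_iff₀ (by positivity), ← mul_pow]
  gcongr

end Normed

section InnerProduct

variable {𝕜 E : Type*} [RCLike 𝕜] [NormedAddCommGroup E] [InnerProductSpace 𝕜 E] [CompleteSpace E]

theorem isUnit_of_forall_mul_norm_sq_le_re_inner {X : E →L[𝕜] E} {c : ℝ} (hc : 0 < c)
    (h : ∀ u, c * ‖u‖ ^ 2 ≤ re ⟪u, X u⟫_𝕜) : IsUnit X := by
  refine isUnit_of_forall_le_norm_inner_map X (c := ⟨c, hc.le⟩) hc fun u => ?_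
  calc ‖u‖ ^ 2 * c = c * ‖u‖ ^ 2 := mul_comm _ _
    _ ≤ re ⟪u, X u⟫_𝕜 := h u
    _ ≤ ‖⟪u, X u⟫_𝕜‖ := re_le_norm _
    _ = ‖⟪X u, u⟫_𝕜‖ := norm_inner_symm _ _

theorem norm_apply_sq_eq_re_inner_star_mul_self (R : E →L[𝕜] E) (u : E) :
    ‖R u‖ ^ 2 = re ⟪u, (star R * R) u⟫_𝕜 :=
  apply_norm_sq_eq_inner_adjoint_right R u

theorem IsSelfAdjoint.re_inner_add_map_add_sub_re_inner_sub_map_sub {S : E →L[𝕜] E}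
    (hS : IsSelfAdjoint S) (a b : E) :
    re ⟪a + b, S (a + b)⟫_𝕜 - re ⟪a - b, S (a - b)⟫_𝕜 = 4 * re ⟪b, S a⟫_𝕜 := by
  have hab : re ⟪a, S b⟫_𝕜 = re ⟪b, S a⟫_𝕜 := by
    rw [← adjoint_inner_left, hS.adjoint_eq, inner_re_symm]
  simp only [map_add, map_sub, inner_add_left, inner_add_right, inner_sub_left, inner_sub_right,
    hab]
  ring

theorem four_mul_re_inner_mul_star_mul_self_mul {Q : E →L[𝕜] E} (hQ : IsSelfAdjoint Q)
    (R A : E →L[𝕜] E) (u : E) :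
    4 * re ⟪u, (Q * (star R * R) * A) u⟫_𝕜 = ‖R ((A + Q) u)‖ ^ 2 - ‖R ((A - Q) u)‖ ^ 2 := by
  rw [norm_apply_sq_eq_re_inner_star_mul_self, norm_apply_sq_eq_re_inner_star_mul_self, add_apply,
    sub_apply, (IsSelfAdjoint.star_mul_self R).re_inner_add_map_add_sub_re_inner_sub_map_sub]
  exact congrArg (4 * re ·) (hQ.isSymmetric u _).symm

theorem forall_re_inner_mul_star_mul_self_mul_nonneg_iff {Q : E →L[𝕜] E} (hQ : IsSelfAdjoint Q)
    (R A : E →L[𝕜] E) :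
    (∀ u, 0 ≤ re ⟪u, (Q * (star R * R) * A) u⟫_𝕜) ↔ ∀ u, ‖R ((A - Q) u)‖ ≤ ‖R ((A + Q) u)‖ := by
  refine forall_congr' fun u => ?_
  have h := four_mul_re_inner_mul_star_mul_self_mul hQ R A u
  rw [← sq_le_sq₀ (norm_nonneg _) (norm_nonneg _)]
  constructor <;> intro _ <;> linarith

theorem forall_re_inner_mul_star_mul_self_mul_nonneg_iff_norm_le_one {Q A R : E →L[𝕜] E}
    (hQ : IsSelfAdjoint Q) (hR : IsUnit R) (hD : IsUnit (A + Q)) :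
    (∀ u, 0 ≤ re ⟪u, (Q * (star R * R) * A) u⟫_𝕜) ↔
      ‖R * ((A - Q) * Ring.inverse (A + Q)) * Ring.inverse R‖ ≤ 1 := by
  rw [forall_re_inner_mul_star_mul_self_mul_nonneg_iff hQ, hR.norm_mul_mul_inverse_le_one_iff]
  exact (hD.forall_mul_inverse_apply_iff _ fun x y => ‖R x‖ ≤ ‖R y‖).symm

end InnerProduct

section Complex

variable {V : Type*} [NormedAddCommGroup V] [InnerProductSpace ℂ V] [CompleteSpace V]

theorem posInvertible_iff_isStrictlyPositive {S : V →L[ℂ] V} :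
    PosInvertible S ↔ IsStrictlyPositive S := by
  constructor
  · rintro ⟨hSsa, η, hη, hS⟩
    refine ⟨(nonneg_iff_isPositive S).2 (isPositive_def'.2 ⟨hSsa, fun u => ?_⟩),
      isUnit_of_forall_mul_norm_sq_le_re_inner hη hS⟩
    rw [reApplyInnerSelf_apply, inner_re_symm]
    exact le_trans (by positivity) (hS u)
  · intro hS
    obtain ⟨R, hR, rfl⟩ := CStarAlgebra.isStrictlyPositive_iff_eq_star_mul_self.1 hS
    obtain ⟨η, hη, hRη⟩ := hR.exists_pos_mul_norm_sq_le_norm_apply_sq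
    exact ⟨IsSelfAdjoint.star_mul_self R, η, hη, fun u =>
      (hRη u).trans_eq (norm_apply_sq_eq_re_inner_star_mul_self R u)⟩

theorem re_inner_one_add_add_I_smul_apply {T : V →L[ℂ] V} (hT : IsSelfAdjoint T) (Q : V →L[ℂ] V)
    (u : V) : (inner ℂ u (((1 : V →L[ℂ] V) + Q + Complex.I • T) u)).re
      = ‖u‖ ^ 2 + (inner ℂ u (Q u)).re := by
  have hTu : (inner ℂ u (T u)).im = 0 := hT.isSymmetric.im_inner_self_apply u
  have hu : (inner ℂ u u).re = ‖u‖ ^ 2 := by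
    simpa using inner_self_eq_norm_sq (𝕜 := ℂ) u
  simp only [add_apply, one_apply_eq_self, smul_apply, inner_add_right, inner_smul_right,
    Complex.add_re, Complex.mul_re, Complex.I_re, Complex.I_im, hTu, hu]
  ring

theorem isUnit_one_add_add_I_smul {T Q : V →L[ℂ] V} (hT : IsSelfAdjoint T)
    (hQ : ∀ u : V, 0 ≤ (inner ℂ u (Q u)).re) : IsUnit ((1 : V →L[ℂ] V) + Q + Complex.I • T) := by
  refine isUnit_of_forall_mul_norm_sq_le_re_inner one_pos fun u => ?_
  rw [RCLike.re_to_complex, re_inner_one_add_add_I_smul_apply hT]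
  linarith [hQ u]

end Complex

theorem accretive_exists_iff_similar_contraction_general
    {V : Type*} [NormedAddCommGroup V] [InnerProductSpace ℂ V] [CompleteSpace V]
    (T Q : V →L[ℂ] V) (hT : IsSelfAdjoint T) (hQ : IsSelfAdjoint Q)
    (hQnn : ∀ u : V, 0 ≤ (inner ℂ u (Q u) : ℂ).re)
    (C : V →L[ℂ] V)
    (hC : C = ((1 : V →L[ℂ] V) - Q + Complex.I • T) *
      Ring.inverse ((1 : V →L[ℂ] V) + Q + Complex.I • T)) :
    (∃ S : V →L[ℂ] V, PosInvertible S ∧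
      ∀ u : V, 0 ≤ (inner ℂ u ((Q * S * ((1 : V →L[ℂ] V) + Complex.I • T)) u) : ℂ).re) ↔
    (∃ R : V →L[ℂ] V, IsUnit R ∧ ‖R * C * Ring.inverse R‖ ≤ 1) := by
  have hD := isUnit_one_add_add_I_smul hT hQnn
  rw [add_right_comm] at hD hC
  rw [sub_add_eq_add_sub] at hC
  subst hC
  have key (R : V →L[ℂ] V) (hR : IsUnit R) :=
    forall_re_inner_mul_star_mul_self_mul_nonneg_iff_norm_le_one hQ hR hD
  simp only [posInvertible_iff_isStrictlyPositive,
    CStarAlgebra.isStrictlyPositive_iff_eq_star_mul_self]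
  constructor
  · rintro ⟨_, ⟨R, hR, rfl⟩, hacc⟩
    exact ⟨R, hR, (key R hR).1 hacc⟩
  · rintro ⟨R, hR, hRC⟩
    exact ⟨_, ⟨R, hR, rfl⟩, (key R hR).2 hRC⟩

/-- Let `V` be a complex Hilbert space and `T, Q` bounded selfadjoint
operators on `V` with `Q` nonnegative and injective. Then there exists a positive
invertible operator `S` on `V` such that `QS(I + iT)` is accretive if and only if the
operator `C := (I − Q + iT)(I + Q + iT)⁻¹` is similar to a contraction. -/
theorem accretive_exists_iff_similar_contraction
    {V : Type*} [NormedAddCommGroup V] [InnerProductSpace ℂ V] [CompleteSpace V]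
    (T Q : V →L[ℂ] V) (hT : IsSelfAdjoint T) (hQ : IsSelfAdjoint Q)
    (hQnn : ∀ u : V, 0 ≤ (inner ℂ u (Q u) : ℂ).re) (hQinj : Function.Injective Q)
    (C : V →L[ℂ] V)
    (hC : C = ((1 : V →L[ℂ] V) - Q + Complex.I • T) *
      Ring.inverse ((1 : V →L[ℂ] V) + Q + Complex.I • T)) :
    (∃ S : V →L[ℂ] V, PosInvertible S ∧
      ∀ u : V, 0 ≤ (inner ℂ u ((Q * S * ((1 : V →L[ℂ] V) + Complex.I • T)) u) : ℂ).re) ↔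
    (∃ R : V →L[ℂ] V, IsUnit R ∧ ‖R * C * Ring.inverse R‖ ≤ 1) :=
  accretive_exists_iff_similar_contraction_general T Q hT hQ hQnn C hC
end
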